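/- For each B ∈ (B₁, B̄) and each A ∈ (A̲(B), Ā(B)], there exist unique points U(A,B) and u(A,B) satisfying x₁(B) < U(A,B) < x₂(B) < u(A,B) such that g_{A,B}(U(A,B)) = g_{A,B}(u(A,B)) = ℓ, g_{A,B}'(U(A,B)) > 0, g_{A,B}'(u(A,B)) < 0, and moreover g_{A,B}(x₁(B)) ≤ −k. -/

import Mathlib

open MeasureTheory Set Filter Topology

noncomputable def gfun (μ σ a : ℝ) (h : ℝ → ℝ) (A B x : ℝ) : ℝ :=
  A - B * Real.exp (-(2 * μ / σ ^ 2) * (x - a)) -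
    (2 * μ / σ ^ 2) / μ * ∫ y in a..x, h y * Real.exp (-(2 * μ / σ ^ 2) * (x - y))

noncomputable def F1 (μ σ a : ℝ) (h : ℝ → ℝ) (B x : ℝ) : ℝ :=
  B - 1 / μ * ∫ y in a..x, deriv h y * Real.exp ((2 * μ / σ ^ 2) * (y - a))

noncomputable def Bbar (μ σ a : ℝ) (h : ℝ → ℝ) : ℝ :=
  -(1 / μ) * ∫ y in Set.Iic a, deriv h y * Real.exp ((2 * μ / σ ^ 2) * (y - a))

/-!
Integrating `h` by parts against `e^{λ(y-a)}` gives
`g_{A,B}(x) = A - h(x)/μ - e^{-λ(x-a)} F₁(B,x)` and `g_{A,B}' = λ e^{-λ(x-a)} F₁(B,·)`.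
Since `h'` is negative before `a` and positive after it, `F₁(B,·)` is positive on `(x₁, x₂)` and
negative after `x₂`, so `g_{A,B}` increases strictly on `[x₁, x₂]` and decreases strictly on
`[x₂, ∞)`, with `g_{A,B}(xᵢ) = A - h(xᵢ)/μ`. The bounds on `A` put `ℓ` strictly between
`g_{A,B}(x₁) ≤ -k` and `g_{A,B}(x₂)`, and `g_{A,B} → -∞` because `h → ∞`; the intermediate value
theorem gives `U` and `u`, and strict monotonicity makes them unique.
-/

variable {μ σ a A B : ℝ} {h : ℝ → ℝ}

-- At the kink `a` the junk value `deriv h a = 0` still fits between the one-sided derivatives,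
-- because `a` is a minimum.
theorem monotone_deriv_of_convexOn (hconv : ConvexOn ℝ univ h) (hmin : IsMinOn h univ a)
    (hdiff : ∀ x ≠ a, DifferentiableAt ℝ h x) : Monotone (deriv h) := by
  have hda : deriv h a = 0 := (hmin.isLocalMin univ_mem).deriv_eq_zero
  have hleft : ∀ x < a, deriv h x ≤ 0 := fun x hx =>
    (hconv.deriv_le_slope (mem_univ x) (mem_univ a) hx (hdiff x hx.ne)).trans <| by
      rw [slope_def_field]
      exact div_nonpos_of_nonpos_of_nonneg (sub_nonpos.2 (hmin (mem_univ x))) (sub_pos.2 hx).le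
  have hright : ∀ y, a < y → 0 ≤ deriv h y := fun y hy =>
    le_trans (by
      rw [slope_def_field]
      exact div_nonneg (sub_nonneg.2 (hmin (mem_univ y))) (sub_pos.2 hy).le)
      (hconv.slope_le_deriv (mem_univ a) (mem_univ y) hy (hdiff y hy.ne'))
  intro x y hxy
  rcases hxy.eq_or_lt with rfl | hxy
  · rfl
  by_cases hx : x = a
  · subst hx
    exact hda ▸ hright y hxy
  by_cases hy : y = a
  · subst hy
    exact hda ▸ hleft x hxy
  exact (hconv.deriv_le_slope (mem_univ x) (mem_univ y) hxy (hdiff x hx)).trans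
    (hconv.slope_le_deriv (mem_univ x) (mem_univ y) hxy (hdiff y hy))

theorem ConvexOn.tendsto_atTop_of_deriv_pos {f : ℝ → ℝ} {c : ℝ} (hf : ConvexOn ℝ univ f)
    (hd : DifferentiableAt ℝ f c) (hpos : 0 < deriv f c) : Tendsto f atTop atTop := by
  refine tendsto_atTop_mono' _ ((eventually_gt_atTop c).mono fun x hx => ?_)
    (tendsto_atTop_add_const_left _ (f c)
      ((tendsto_atTop_add_const_right _ (-c) tendsto_id).const_mul_atTop hpos))
  have := hf.deriv_le_slope (mem_univ c) (mem_univ x) hx hd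
  rw [slope_def_field, le_div_iff₀ (sub_pos.2 hx)] at this
  simp only [id]
  linarith

theorem existsUnique_mem_Ioo_eq_of_strictMonoOn {f : ℝ → ℝ} {p q y : ℝ} (hpq : p ≤ q)
    (hf : ContinuousOn f (Icc p q)) (hmono : StrictMonoOn f (Icc p q)) (hp : f p < y)
    (hq : y < f q) : ∃! x, x ∈ Ioo p q ∧ f x = y := by
  obtain ⟨x, hx, hfx⟩ := intermediate_value_Ioo hpq hf ⟨hp, hq⟩
  exact ⟨x, ⟨hx, hfx⟩, fun x' ⟨hx', hfx'⟩ => hmono.injOn (Ioo_subset_Icc_self hx')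
    (Ioo_subset_Icc_self hx) (hfx'.trans hfx.symm)⟩

theorem existsUnique_mem_Ioi_eq_of_strictAntiOn {f : ℝ → ℝ} {q y : ℝ}
    (hf : ContinuousOn f (Ici q)) (hanti : StrictAntiOn f (Ici q)) (hq : y < f q)
    (htop : Tendsto f atTop atBot) : ∃! x, x ∈ Ioi q ∧ f x = y := by
  obtain ⟨X, hXy, hqX⟩ := ((htop.eventually_lt_atBot y).and (eventually_gt_atTop q)).exists
  obtain ⟨x, hx, hfx⟩ :=
    intermediate_value_Ioo' hqX.le (hf.mono Icc_subset_Ici_self) ⟨hXy, hq⟩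
  exact ⟨x, ⟨hx.1, hfx⟩, fun x' ⟨hx', hfx'⟩ => hanti.injOn (mem_Ici.2 hx'.le)
    (mem_Ici.2 hx.1.le) (hfx'.trans hfx.symm)⟩

theorem integral_mul_exp_add_integral_deriv_mul_exp {x : ℝ} (hcont : Continuous h)
    (hdiff : ∀ y ≠ a, DifferentiableAt ℝ h y) (hh' : IntervalIntegrable (deriv h) volume a x)
    (l : ℝ) :
    l * (∫ y in a..x, h y * Real.exp (l * (y - a))) +
        ∫ y in a..x, deriv h y * Real.exp (l * (y - a)) = h x * Real.exp (l * (x - a)) - h a := by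
  have hne : ∀ y ∈ Ioo (min a x) (max a x), y ≠ a := by
    rintro y ⟨h1, h2⟩ rfl
    rcases le_total y x with hyx | hyx <;> simp [hyx] at h1 h2
  have hexp : ∀ y, HasDerivAt (fun y => Real.exp (l * (y - a))) (l * Real.exp (l * (y - a))) y :=
    fun y => by simpa [mul_comm] using (((hasDerivAt_id y).sub_const a).const_mul l).exp
  have := intervalIntegral.integral_deriv_mul_eq_sub_of_hasDerivAt hcont.continuousOn
    (by fun_prop) (fun y hy => (hdiff y (hne y hy)).hasDerivAt) (fun y _ => hexp y) hh'
    (Continuous.intervalIntegrable (by fun_prop) _ _)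
  rw [intervalIntegral.integral_add (hh'.mul_continuousOn (by fun_prop))
    (Continuous.intervalIntegrable (by fun_prop) _ _)] at this
  simp only [sub_self, mul_zero, Real.exp_zero, mul_one, mul_left_comm (h _) l,
    intervalIntegral.integral_const_mul] at this
  rw [add_comm]
  exact this

theorem integral_deriv_mul_exp_pos {c d : ℝ} (hpos : ∀ x, a < x → 0 < deriv h x)
    (hh' : IntervalIntegrable (deriv h) volume c d) (hac : a ≤ c) (hcd : c < d) (l b : ℝ) :
    0 < ∫ y in c..d, deriv h y * Real.exp (l * (y - b)) :=
  intervalIntegral.intervalIntegral_pos_of_pos_on (hh'.mul_continuousOn (by fun_prop))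
    (fun y hy => mul_pos (hpos y (hac.trans_lt hy.1)) (Real.exp_pos _)) hcd

theorem integral_deriv_mul_exp_neg {c d : ℝ} (hneg : ∀ x, x < a → deriv h x < 0)
    (hh' : IntervalIntegrable (deriv h) volume c d) (hda : d ≤ a) (hcd : c < d) (l b : ℝ) :
    ∫ y in c..d, deriv h y * Real.exp (l * (y - b)) < 0 := by
  have := intervalIntegral.intervalIntegral_pos_of_pos_on
    (f := fun y => -(deriv h y * Real.exp (l * (y - b)))) (hh'.mul_continuousOn (by fun_prop)).neg
    (fun y hy => neg_pos.2 (mul_neg_of_neg_of_pos (hneg y (hy.2.trans_le hda))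
      (Real.exp_pos (l * (y - b))))) hcd
  rwa [intervalIntegral.integral_neg, neg_pos] at this

theorem F1_eq_integral_of_F1_eq_zero (hh' : ∀ x, IntervalIntegrable (deriv h) volume a x)
    {z : ℝ} (hz : F1 μ σ a h B z = 0) (x : ℝ) :
    F1 μ σ a h B x =
      1 / μ * ∫ y in x..z, deriv h y * Real.exp (2 * μ / σ ^ 2 * (y - a)) := by
  unfold F1 at hz ⊢
  rw [← intervalIntegral.integral_interval_sub_left ((hh' z).mul_continuousOn (by fun_prop))
    ((hh' x).mul_continuousOn (by fun_prop))]
  linear_combination hz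

theorem F1_pos_of_mem_Ioo (hμ : 0 < μ) (hneg : ∀ x, x < a → deriv h x < 0)
    (hpos : ∀ x, a < x → 0 < deriv h x) (hh' : ∀ c d, IntervalIntegrable (deriv h) volume c d)
    {p q x : ℝ} (hp : F1 μ σ a h B p = 0) (hq : F1 μ σ a h B q = 0) (hx : x ∈ Ioo p q) :
    0 < F1 μ σ a h B x := by
  rcases le_total x a with hxa | hax
  · rw [F1_eq_integral_of_F1_eq_zero (hh' a) hp, intervalIntegral.integral_symm, mul_neg,
      neg_pos]
    exact mul_neg_of_pos_of_neg (by positivity)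
      (integral_deriv_mul_exp_neg hneg (hh' _ _) hxa hx.1 _ _)
  · rw [F1_eq_integral_of_F1_eq_zero (hh' a) hq]
    exact mul_pos (by positivity) (integral_deriv_mul_exp_pos hpos (hh' _ _) hax hx.2 _ _)

theorem F1_neg_of_lt (hμ : 0 < μ) (hpos : ∀ x, a < x → 0 < deriv h x)
    (hh' : ∀ c d, IntervalIntegrable (deriv h) volume c d) {q x : ℝ} (haq : a ≤ q)
    (hq : F1 μ σ a h B q = 0) (hx : q < x) : F1 μ σ a h B x < 0 := by
  rw [F1_eq_integral_of_F1_eq_zero (hh' a) hq, intervalIntegral.integral_symm, mul_neg,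
    neg_lt_zero]
  exact mul_pos (by positivity) (integral_deriv_mul_exp_pos hpos (hh' _ _) haq hx _ _)

theorem gfun_eq_sub_exp_mul (A B x : ℝ) :
    gfun μ σ a h A B x = A - Real.exp (-(2 * μ / σ ^ 2) * (x - a)) *
      (B + 2 * μ / σ ^ 2 / μ * ∫ y in a..x, h y * Real.exp (2 * μ / σ ^ 2 * (y - a))) := by
  have hshift : ∫ y in a..x, h y * Real.exp (-(2 * μ / σ ^ 2) * (x - y)) =
      Real.exp (-(2 * μ / σ ^ 2) * (x - a)) *
        ∫ y in a..x, h y * Real.exp (2 * μ / σ ^ 2 * (y - a)) := by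
    rw [← intervalIntegral.integral_const_mul]
    congr 1 with y
    rw [mul_left_comm, ← Real.exp_add]
    ring_nf
  rw [gfun, hshift]
  ring

theorem gfun_eq_sub_div_sub_exp_mul_F1 {x : ℝ} (hcont : Continuous h) (ha : h a = 0)
    (hdiff : ∀ y ≠ a, DifferentiableAt ℝ h y) (hh' : IntervalIntegrable (deriv h) volume a x)
    (A B : ℝ) :
    gfun μ σ a h A B x =
      A - h x / μ - Real.exp (-(2 * μ / σ ^ 2) * (x - a)) * F1 μ σ a h B x := by
  have hparts := integral_mul_exp_add_integral_deriv_mul_exp hcont hdiff hh' (2 * μ / σ ^ 2)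
  have hexp :
      Real.exp (-(2 * μ / σ ^ 2) * (x - a)) * Real.exp (2 * μ / σ ^ 2 * (x - a)) = 1 := by
    rw [← Real.exp_add, neg_mul, neg_add_cancel, Real.exp_zero]
  rw [ha] at hparts
  rw [gfun_eq_sub_exp_mul, F1]
  linear_combination (-Real.exp (-(2 * μ / σ ^ 2) * (x - a)) / μ) * hparts - h x / μ * hexp

theorem gfun_eq_sub_div_of_F1_eq_zero {x : ℝ} (hcont : Continuous h) (ha : h a = 0)
    (hdiff : ∀ y ≠ a, DifferentiableAt ℝ h y) (hh' : IntervalIntegrable (deriv h) volume a x)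
    (hF : F1 μ σ a h B x = 0) (A : ℝ) : gfun μ σ a h A B x = A - h x / μ := by
  rw [gfun_eq_sub_div_sub_exp_mul_F1 hcont ha hdiff hh', hF, mul_zero, sub_zero]

theorem hasDerivAt_gfun {x : ℝ} (hcont : Continuous h) (ha : h a = 0)
    (hdiff : ∀ y ≠ a, DifferentiableAt ℝ h y) (hh' : IntervalIntegrable (deriv h) volume a x)
    (A B : ℝ) :
    HasDerivAt (gfun μ σ a h A B)
      (2 * μ / σ ^ 2 * Real.exp (-(2 * μ / σ ^ 2) * (x - a)) * F1 μ σ a h B x) x := by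
  rw [F1, show gfun μ σ a h A B = _ from funext (gfun_eq_sub_exp_mul A B)]
  set l := 2 * μ / σ ^ 2
  have hexp : HasDerivAt (fun x => Real.exp (-l * (x - a)))
      (-l * Real.exp (-l * (x - a))) x := by
    simpa [mul_comm] using (((hasDerivAt_id x).sub_const a).const_mul (-l)).exp
  have hint : HasDerivAt (fun x => ∫ y in a..x, h y * Real.exp (l * (y - a)))
      (h x * Real.exp (l * (x - a))) x :=
    (Continuous.integral_hasStrictDerivAt (by fun_prop) a x).hasDerivAt
  have hparts := integral_mul_exp_add_integral_deriv_mul_exp hcont hdiff hh' l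
  rw [ha] at hparts
  refine ((hexp.mul ((hint.const_mul (l / μ)).const_add B)).const_sub A).congr_deriv ?_
  linear_combination (l * Real.exp (-l * (x - a)) / μ) * hparts

theorem continuous_gfun (hcont : Continuous h) (ha : h a = 0)
    (hdiff : ∀ y ≠ a, DifferentiableAt ℝ h y)
    (hh' : ∀ x, IntervalIntegrable (deriv h) volume a x) (A B : ℝ) :
    Continuous (gfun μ σ a h A B) :=
  continuous_iff_continuousAt.2 fun x => (hasDerivAt_gfun hcont ha hdiff (hh' x) A B).continuousAt

theorem deriv_gfun_pos {x : ℝ} (hμ : 0 < μ) (hσ : 0 < σ) (hcont : Continuous h) (ha : h a = 0)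
    (hdiff : ∀ y ≠ a, DifferentiableAt ℝ h y) (hh' : IntervalIntegrable (deriv h) volume a x)
    (hF : 0 < F1 μ σ a h B x) : 0 < deriv (gfun μ σ a h A B) x := by
  rw [(hasDerivAt_gfun hcont ha hdiff hh' A B).deriv]
  exact mul_pos (by positivity) hF

theorem deriv_gfun_neg {x : ℝ} (hμ : 0 < μ) (hσ : 0 < σ) (hcont : Continuous h) (ha : h a = 0)
    (hdiff : ∀ y ≠ a, DifferentiableAt ℝ h y) (hh' : IntervalIntegrable (deriv h) volume a x)
    (hF : F1 μ σ a h B x < 0) : deriv (gfun μ σ a h A B) x < 0 := by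
  rw [(hasDerivAt_gfun hcont ha hdiff hh' A B).deriv]
  exact mul_neg_of_pos_of_neg (by positivity) hF

theorem strictMonoOn_gfun {p q : ℝ} (hμ : 0 < μ) (hσ : 0 < σ) (hcont : Continuous h)
    (ha : h a = 0) (hdiff : ∀ y ≠ a, DifferentiableAt ℝ h y)
    (hh' : ∀ x, IntervalIntegrable (deriv h) volume a x)
    (hF : ∀ x ∈ Ioo p q, 0 < F1 μ σ a h B x)
    (A : ℝ) : StrictMonoOn (gfun μ σ a h A B) (Icc p q) :=
  strictMonoOn_of_deriv_pos (convex_Icc p q) (continuous_gfun hcont ha hdiff hh' A B).continuousOn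
    fun x hx => deriv_gfun_pos hμ hσ hcont ha hdiff (hh' x) (hF x (by rwa [interior_Icc] at hx))

theorem strictAntiOn_gfun {q : ℝ} (hμ : 0 < μ) (hσ : 0 < σ) (hcont : Continuous h)
    (ha : h a = 0) (hdiff : ∀ y ≠ a, DifferentiableAt ℝ h y)
    (hh' : ∀ x, IntervalIntegrable (deriv h) volume a x)
    (hF : ∀ x, q < x → F1 μ σ a h B x < 0)
    (A : ℝ) : StrictAntiOn (gfun μ σ a h A B) (Ici q) :=
  strictAntiOn_of_deriv_neg (convex_Ici q) (continuous_gfun hcont ha hdiff hh' A B).continuousOn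
    fun x hx => deriv_gfun_neg hμ hσ hcont ha hdiff (hh' x) (hF x (by rwa [interior_Ici] at hx))

theorem gfun_le_sub_mul {x : ℝ} (hμ : 0 < μ) (hσ : 0 < σ) (hcont : Continuous h)
    (hnonneg : ∀ y, 0 ≤ h y) (hmono : MonotoneOn h (Ici a)) (hB : 0 ≤ B) (hx : a + 1 ≤ x)
    (A : ℝ) :
    gfun μ σ a h A B x ≤
      A - 2 * μ / σ ^ 2 / μ * Real.exp (-(2 * μ / σ ^ 2)) * h (x - 1) := by
  set l := 2 * μ / σ ^ 2
  have hl : 0 < l := by positivity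
  have hc : Continuous fun y => h y * Real.exp (-l * (x - y)) := by fun_prop
  have htail : 0 ≤ ∫ y in a..x - 1, h y * Real.exp (-l * (x - y)) :=
    intervalIntegral.integral_nonneg (by linarith)
      fun y _ => mul_nonneg (hnonneg y) (Real.exp_pos _).le
  have hlast : Real.exp (-l) * h (x - 1) ≤ ∫ y in x - 1..x, h y * Real.exp (-l * (x - y)) := by
    have := intervalIntegral.integral_mono_on (μ := volume) (by linarith)
      (continuous_const.intervalIntegrable _ _) (hc.intervalIntegrable (x - 1) x)
      fun y hy => show Real.exp (-l) * h (x - 1) ≤ _ by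
        rw [mul_comm]
        refine mul_le_mul (hmono (mem_Ici.2 (by linarith)) (mem_Ici.2 (by linarith [hy.1])) hy.1)
          (Real.exp_le_exp.2 (by nlinarith [hy.1, hy.2])) (Real.exp_pos _).le (hnonneg y)
    simpa using this
  rw [gfun, ← intervalIntegral.integral_add_adjacent_intervals (hc.intervalIntegrable a (x - 1))
    (hc.intervalIntegrable (x - 1) x)]
  have hBexp : 0 ≤ B * Real.exp (-l * (x - a)) := by positivity
  have hlμ : 0 ≤ l / μ := by positivity
  nlinarith [mul_le_mul_of_nonneg_left hlast hlμ, mul_nonneg hlμ htail]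

theorem tendsto_gfun_atTop_atBot (hμ : 0 < μ) (hσ : 0 < σ) (hcont : Continuous h)
    (hnonneg : ∀ y, 0 ≤ h y) (hmono : MonotoneOn h (Ici a)) (htop : Tendsto h atTop atTop)
    (hB : 0 ≤ B) (A : ℝ) : Tendsto (gfun μ σ a h A B) atTop atBot := by
  have hc : 0 < 2 * μ / σ ^ 2 / μ * Real.exp (-(2 * μ / σ ^ 2)) := by positivity
  have hbound : Tendsto
      (fun x => A - 2 * μ / σ ^ 2 / μ * Real.exp (-(2 * μ / σ ^ 2)) * h (x - 1)) atTop atBot := by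
    simp only [sub_eq_add_neg A]
    exact tendsto_atBot_add_const_left _ A (tendsto_neg_atTop_atBot.comp
      ((htop.comp (tendsto_atTop_add_const_right _ (-1) tendsto_id)).const_mul_atTop hc))
  exact tendsto_atBot_mono' _ ((eventually_ge_atTop (a + 1)).mono
    fun x hx => gfun_le_sub_mul hμ hσ hcont hnonneg hmono hB hx A) hbound

theorem stmt9_general (μ σ a : ℝ) (h : ℝ → ℝ)
    (hμ : 0 < μ) (hσ : 0 < σ)
    (hconv : ConvexOn ℝ Set.univ h)
    (hcont : Continuous h)
    (hnonneg : ∀ x, 0 ≤ h x)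
    (ha : h a = 0)
    (hC2 : ∀ x : ℝ, x ≠ a → ContDiffAt ℝ 2 h x)
    (hneg : ∀ x, x < a → deriv h x < 0)
    (hpos : ∀ x, a < x → 0 < deriv h x)
    (x1 x2 : ℝ → ℝ)
    (hx1 : ∀ B ∈ Set.Ioo 0 (Bbar μ σ a h), x1 B < a ∧ F1 μ σ a h B (x1 B) = 0)
    (hx2 : ∀ B : ℝ, 0 < B → a < x2 B ∧ F1 μ σ a h B (x2 B) = 0)
    (k ℓ : ℝ) (hk : 0 < k) (hl : 0 < ℓ) (B₁ : ℝ)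
    (hB₁ : B₁ ∈ Set.Ioo 0 (Bbar μ σ a h) ∧
      gfun μ σ a h 0 B₁ (x2 B₁) - gfun μ σ a h 0 B₁ (x1 B₁) = k + ℓ)
    :
    ∀ B ∈ Set.Ioo B₁ (Bbar μ σ a h),
      ∀ A ∈ Set.Ioc (h (x2 B) / μ + ℓ) (h (x1 B) / μ - k),
        gfun μ σ a h A B (x1 B) ≤ -k ∧
        ∃ Uv uv : ℝ,
          (x1 B < Uv ∧ Uv < x2 B ∧ x2 B < uv ∧
           gfun μ σ a h A B Uv = ℓ ∧ gfun μ σ a h A B uv = ℓ ∧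
           0 < deriv (gfun μ σ a h A B) Uv ∧ deriv (gfun μ σ a h A B) uv < 0) ∧
          ∀ Uv₀ uv₀ : ℝ,
            (x1 B < Uv₀ ∧ Uv₀ < x2 B ∧ x2 B < uv₀ ∧
             gfun μ σ a h A B Uv₀ = ℓ ∧ gfun μ σ a h A B uv₀ = ℓ ∧
             0 < deriv (gfun μ σ a h A B) Uv₀ ∧ deriv (gfun μ σ a h A B) uv₀ < 0) →
            Uv₀ = Uv ∧ uv₀ = uv := by
  intro B hB A hA
  have hB0 : 0 < B := hB₁.1.1.trans hB.1
  obtain ⟨hx1a, hF1x1⟩ := hx1 B ⟨hB0, hB.2⟩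
  obtain ⟨hx2a, hF1x2⟩ := hx2 B hB0
  have hdiff : ∀ x ≠ a, DifferentiableAt ℝ h x := fun x hx =>
    (hC2 x hx).differentiableAt two_ne_zero
  have hh' : ∀ c d, IntervalIntegrable (deriv h) volume c d := fun _ _ =>
    (monotone_deriv_of_convexOn hconv (fun x _ => ha ▸ hnonneg x) hdiff).intervalIntegrable
  have hFpos : ∀ x ∈ Ioo (x1 B) (x2 B), 0 < F1 μ σ a h B x := fun _ hx =>
    F1_pos_of_mem_Ioo hμ hneg hpos hh' hF1x1 hF1x2 hx
  have hFneg : ∀ x, x2 B < x → F1 μ σ a h B x < 0 := fun _ hx =>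
    F1_neg_of_lt hμ hpos hh' hx2a.le hF1x2 hx
  have hlow : gfun μ σ a h A B (x1 B) ≤ -k := by
    rw [gfun_eq_sub_div_of_F1_eq_zero hcont ha hdiff (hh' a _) hF1x1]
    linarith [hA.2]
  have hhigh : ℓ < gfun μ σ a h A B (x2 B) := by
    rw [gfun_eq_sub_div_of_F1_eq_zero hcont ha hdiff (hh' a _) hF1x2]
    linarith [hA.1]
  have hgc : Continuous (gfun μ σ a h A B) := continuous_gfun hcont ha hdiff (hh' a) A B
  obtain ⟨U, ⟨hU, hgU⟩, hU_unique⟩ := existsUnique_mem_Ioo_eq_of_strictMonoOn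
    (hx1a.trans hx2a).le hgc.continuousOn
    (strictMonoOn_gfun hμ hσ hcont ha hdiff (hh' a) hFpos A) (by linarith) hhigh
  have hmono : MonotoneOn h (Ici a) := (strictMonoOn_of_deriv_pos (convex_Ici a)
    hcont.continuousOn fun x hx => hpos x (by rwa [interior_Ici] at hx)).monotoneOn
  have htop : Tendsto h atTop atTop :=
    hconv.tendsto_atTop_of_deriv_pos (hdiff (a + 1) (by linarith)) (hpos _ (by linarith))
  obtain ⟨u, ⟨hu, hgu⟩, hu_unique⟩ := existsUnique_mem_Ioi_eq_of_strictAntiOn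
    hgc.continuousOn (strictAntiOn_gfun hμ hσ hcont ha hdiff (hh' a) hFneg A) hhigh
    (tendsto_gfun_atTop_atBot hμ hσ hcont hnonneg hmono htop hB0.le A)
  refine ⟨hlow, U, u, ⟨hU.1, hU.2, hu, hgU, hgu,
    deriv_gfun_pos hμ hσ hcont ha hdiff (hh' a U) (hFpos U hU),
    deriv_gfun_neg hμ hσ hcont ha hdiff (hh' a u) (hFneg u hu)⟩, ?_⟩
  rintro U' u' ⟨hU'₁, hU'₂, hu', hgU', hgu', -, -⟩
  exact ⟨hU_unique U' ⟨⟨hU'₁, hU'₂⟩, hgU'⟩, hu_unique u' ⟨hu', hgu'⟩⟩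

theorem stmt9 (μ σ a : ℝ) (h : ℝ → ℝ)
    (hμ : 0 < μ) (hσ : 0 < σ)
    (hconv : ConvexOn ℝ Set.univ h)
    (hcont : Continuous h)
    (hnonneg : ∀ x, 0 ≤ h x)
    (ha : h a = 0)
    (hC2 : ∀ x : ℝ, x ≠ a → ContDiffAt ℝ 2 h x)
    (hneg : ∀ x, x < a → deriv h x < 0)
    (hpos : ∀ x, a < x → 0 < deriv h x)
    (hint : IntegrableOn (fun y => |deriv h y| * Real.exp ((2 * μ / σ ^ 2) * (y - a))) (Set.Iic a))
    (x1 x2 : ℝ → ℝ)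
    (hx1 : ∀ B ∈ Set.Ioo 0 (Bbar μ σ a h), x1 B < a ∧ F1 μ σ a h B (x1 B) = 0)
    (hx2 : ∀ B : ℝ, 0 < B → a < x2 B ∧ F1 μ σ a h B (x2 B) = 0)
    (k ℓ : ℝ) (hk : 0 < k) (hl : 0 < ℓ) (B₁ : ℝ)
    (hB₁ : B₁ ∈ Set.Ioo 0 (Bbar μ σ a h) ∧
      gfun μ σ a h 0 B₁ (x2 B₁) - gfun μ σ a h 0 B₁ (x1 B₁) = k + ℓ)
    :
    ∀ B ∈ Set.Ioo B₁ (Bbar μ σ a h),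
      ∀ A ∈ Set.Ioc (h (x2 B) / μ + ℓ) (h (x1 B) / μ - k),
        gfun μ σ a h A B (x1 B) ≤ -k ∧
        ∃ Uv uv : ℝ,
          (x1 B < Uv ∧ Uv < x2 B ∧ x2 B < uv ∧
           gfun μ σ a h A B Uv = ℓ ∧ gfun μ σ a h A B uv = ℓ ∧
           0 < deriv (gfun μ σ a h A B) Uv ∧ deriv (gfun μ σ a h A B) uv < 0) ∧
          ∀ Uv₀ uv₀ : ℝ,
            (x1 B < Uv₀ ∧ Uv₀ < x2 B ∧ x2 B < uv₀ ∧
             gfun μ σ a h A B Uv₀ = ℓ ∧ gfun μ σ a h A B uv₀ = ℓ ∧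
             0 < deriv (gfun μ σ a h A B) Uv₀ ∧ deriv (gfun μ σ a h A B) uv₀ < 0) →
            Uv₀ = Uv ∧ uv₀ = uv :=
  stmt9_general μ σ a h hμ hσ hconv hcont hnonneg ha hC2 hneg hpos x1 x2 hx1 hx2 k ℓ hk hl B₁ hB₁
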